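/- arXiv:1711.00262 — 6 statements merged into one kernel-verified Lean document; each statement's English description precedes it below -/
import Mathlib

section
/- Let X, Y be real Banach spaces and F : B_X → B_Y a non-expansive bijection. Then F(0) = 0. -/
theorem nonexpansive_bijection_maps_zero_to_zero
    {X Y : Type*} [NormedAddCommGroup X] [NormedSpace ℝ X] [CompleteSpace X]
    [NormedAddCommGroup Y] [NormedSpace ℝ Y] [CompleteSpace Y]
    (F : Metric.closedBall (0 : X) 1 → Metric.closedBall (0 : Y) 1)
    (hbij : Function.Bijective F)
    (hne : ∀ u v : Metric.closedBall (0 : X) 1,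
      ‖(F u : Y) - (F v : Y)‖ ≤ ‖(u : X) - (v : X)‖) :
    (F ⟨0, by simp⟩ : Y) = 0 := by
  by_contra h
  set a : Y := (F ⟨0, by simp⟩ : Y) with ha
  have hna : 0 < ‖a‖ := norm_pos_iff.mpr h
  have hy : -(‖a‖⁻¹ • a) ∈ Metric.closedBall (0 : Y) 1 := by
    simp [norm_smul, abs_of_nonneg (inv_nonneg.mpr (norm_nonneg a)),
      inv_mul_cancel₀ hna.ne']
  obtain ⟨u, hu⟩ := hbij.2 ⟨-(‖a‖⁻¹ • a), hy⟩
  have h1 := hne u ⟨0, by simp⟩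
  rw [hu] at h1
  have hub : ‖(u : X)‖ ≤ 1 := mem_closedBall_zero_iff.mp u.2
  have hval : ‖(-(‖a‖⁻¹ • a) : Y) - a‖ = 1 + ‖a‖ := by
    have : (-(‖a‖⁻¹ • a) : Y) - a = -((‖a‖⁻¹ + 1) • a) := by
      rw [add_smul, one_smul, neg_add]
      abel
    rw [this, norm_neg, norm_smul, Real.norm_of_nonneg (by positivity),
      add_mul, inv_mul_cancel₀ hna.ne', one_mul]
  simp only [hval, sub_zero] at h1
  linarith
end

section
/- Let X, Y be real Banach spaces and F : B_X → B_Y a non-expansive bijection. Then F⁻¹(S_Y) ⊆ S_X, i.e., if ‖F(x)‖ = 1 then ‖x‖ = 1. -/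
/-!
Surjectivity gives `u` with `F u = -F x`. If `‖F x‖ = 1`, non-expansiveness yields
`2 = ‖F x - F u‖ ≤ ‖x - u‖ ≤ ‖x‖ + ‖u‖ ≤ ‖x‖ + 1`, so `‖x‖ ≥ 1`.
-/

open Metric

lemma norm_sub_neg_self {E : Type*} [SeminormedAddCommGroup E] [NormedSpace ℝ E] (y : E) :
    ‖y - -y‖ = 2 * ‖y‖ := by
  rw [sub_neg_eq_add, ← two_smul ℝ y, norm_smul, Real.norm_two]

lemma one_le_norm_of_two_le_norm_sub {E : Type*} [SeminormedAddCommGroup E] {x u : E}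
    (hu : ‖u‖ ≤ 1) (h : 2 ≤ ‖x - u‖) : 1 ≤ ‖x‖ := by
  linarith [norm_sub_le x u]

theorem nonexpansive_bijection_preimage_sphere_subset_sphere_general
    {X Y : Type*} [NormedAddCommGroup X]
    [NormedAddCommGroup Y] [NormedSpace ℝ Y]
    (F : Metric.closedBall (0 : X) 1 → Metric.closedBall (0 : Y) 1)
    (hbij : Function.Bijective F)
    (hne : ∀ u v : Metric.closedBall (0 : X) 1,
      ‖(F u : Y) - (F v : Y)‖ ≤ ‖(u : X) - (v : X)‖) :
    ∀ x : Metric.closedBall (0 : X) 1, ‖(F x : Y)‖ = 1 → ‖(x : X)‖ = 1 := by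
  intro x hx
  obtain ⟨u, hu⟩ := hbij.surjective (-F x)
  have h_far : 2 ≤ ‖(x : X) - u‖ :=
    calc (2 : ℝ) = ‖(F x : Y) - (F u : Y)‖ := by
          rw [hu, coe_neg_closedBall, norm_sub_neg_self, hx, mul_one]
      _ ≤ ‖(x : X) - u‖ := hne x u
  exact le_antisymm (mem_closedBall_zero_iff.mp x.2)
    (one_le_norm_of_two_le_norm_sub (mem_closedBall_zero_iff.mp u.2) h_far)

theorem nonexpansive_bijection_preimage_sphere_subset_sphere
    {X Y : Type*} [NormedAddCommGroup X] [NormedSpace ℝ X] [CompleteSpace X]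
    [NormedAddCommGroup Y] [NormedSpace ℝ Y] [CompleteSpace Y]
    (F : Metric.closedBall (0 : X) 1 → Metric.closedBall (0 : Y) 1)
    (hbij : Function.Bijective F)
    (hne : ∀ u v : Metric.closedBall (0 : X) 1,
      ‖(F u : Y) - (F v : Y)‖ ≤ ‖(u : X) - (v : X)‖) :
    ∀ x : Metric.closedBall (0 : X) 1, ‖(F x : Y)‖ = 1 → ‖(x : X)‖ = 1 :=
  nonexpansive_bijection_preimage_sphere_subset_sphere_general F hbij hne
end

section
/- Let X, Y be real Banach spaces and F : B_X → B_Y a non-expansive bijection. If F(x) is an extreme point of B_Y, then F(a·x) = a·F(x) for all a ∈ (−1, 1). -/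
/-!
`F 0 = 0`: otherwise a preimage `u` of the unit vector `-F 0 / ‖F 0‖` would satisfy
`1 + ‖F 0‖ = ‖F u - F 0‖ ≤ ‖u‖ ≤ 1`.

For `0 ≤ a ≤ 1`, nonexpansiveness gives `‖F (a x)‖ ≤ a` and `‖F x - F (a x)‖ ≤ 1 - a`, so the
extreme point `F x = a • (F (a x) / a) + (1 - a) • ((F x - F (a x)) / (1 - a))` is a convex
combination of two points of the ball, forcing `F (a x) = a • F x`.

For `a < 0`, let `F v = -F x`. The midpoint `m` of `x` and `v` satisfies `‖F x ± F m‖ ≤ 1`,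
so extremality of `F x` gives `F m = 0 = F 0`, hence `m = 0` by injectivity, i.e. `v = -x`;
since `-F x` is again extreme, the first case applied to `v` and `-a` concludes.
-/

open Metric Set Function

section ExtremePoints

variable {E : Type*} [NormedAddCommGroup E] [NormedSpace ℝ E]

theorem neg_mem_extremePoints_closedBall {y : E}
    (hy : y ∈ extremePoints ℝ (closedBall (0 : E) 1)) :
    -y ∈ extremePoints ℝ (closedBall (0 : E) 1) := by
  have h := image_extremePoints (LinearEquiv.neg ℝ : E ≃ₗ[ℝ] E) (closedBall 0 1)
  simp only [LinearEquiv.coe_neg, Pi.neg_apply, id_eq, image_neg_eq_neg, neg_closedBall,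
    neg_zero] at h
  rw [← h]
  exact neg_mem_neg.2 hy

theorem eq_smul_of_mem_extremePoints_closedBall {y u : E}
    (hy : y ∈ extremePoints ℝ (closedBall (0 : E) 1)) {a : ℝ} (ha₀ : 0 ≤ a) (ha₁ : a ≤ 1)
    (hu : ‖u‖ ≤ a) (hyu : ‖y - u‖ ≤ 1 - a) : u = a • y := by
  rcases ha₀.eq_or_lt with rfl | ha₀
  · simpa using hu
  rcases ha₁.eq_or_lt with rfl | ha₁
  · simpa [sub_eq_zero, eq_comm] using hyu
  have hb : 0 < 1 - a := sub_pos.2 ha₁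
  have hu' : a⁻¹ • u ∈ closedBall (0 : E) 1 := by
    rw [mem_closedBall_zero_iff, norm_smul, Real.norm_of_nonneg (inv_nonneg.2 ha₀.le)]
    exact inv_mul_le_one_of_le₀ hu ha₀.le
  have hyu' : (1 - a)⁻¹ • (y - u) ∈ closedBall (0 : E) 1 := by
    rw [mem_closedBall_zero_iff, norm_smul, Real.norm_of_nonneg (inv_nonneg.2 hb.le)]
    exact inv_mul_le_one_of_le₀ hyu hb.le
  have hseg : y ∈ openSegment ℝ (a⁻¹ • u) ((1 - a)⁻¹ • (y - u)) :=
    ⟨a, 1 - a, ha₀, hb, by ring, by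
      rw [smul_inv_smul₀ ha₀.ne', smul_inv_smul₀ hb.ne', add_sub_cancel]⟩
  rw [← hy.2 hu' hyu' hseg, smul_inv_smul₀ ha₀.ne']

theorem eq_zero_of_mem_extremePoints_closedBall {y w : E}
    (hy : y ∈ extremePoints ℝ (closedBall (0 : E) 1)) (h₁ : ‖y + w‖ ≤ 1) (h₂ : ‖y - w‖ ≤ 1) :
    w = 0 := by
  have hu : ‖(2⁻¹ : ℝ) • (y + w)‖ ≤ 2⁻¹ := by
    rw [norm_smul, Real.norm_of_nonneg (by norm_num)]
    linarith
  have hyu : ‖y - (2⁻¹ : ℝ) • (y + w)‖ ≤ 1 - 2⁻¹ := by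
    rw [show y - (2⁻¹ : ℝ) • (y + w) = (2⁻¹ : ℝ) • (y - w) by module, norm_smul,
      Real.norm_of_nonneg (by norm_num)]
    linarith
  have h := eq_smul_of_mem_extremePoints_closedBall hy (by norm_num) (by norm_num) hu hyu
  rw [smul_add, add_eq_left, smul_eq_zero] at h
  exact h.resolve_left (by norm_num)

end ExtremePoints

section UnitBallMap

variable {X Y : Type*} [NormedAddCommGroup X] [NormedAddCommGroup Y] [NormedSpace ℝ Y]
  {F : closedBall (0 : X) 1 → closedBall (0 : Y) 1}

theorem map_zero_eq_zero_of_surjective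
    (hF : ∀ u v, ‖(F u : Y) - F v‖ ≤ ‖(u : X) - v‖) (hsurj : Surjective F) :
    (F ⟨0, mem_closedBall_self zero_le_one⟩ : Y) = 0 := by
  set y₀ : Y := ↑(F ⟨0, mem_closedBall_self zero_le_one⟩)
  by_contra h
  obtain ⟨u, hu⟩ := hsurj ⟨-‖y₀‖⁻¹ • y₀, by simp [norm_smul, h]⟩
  have hdist : ‖(F u : Y) - y₀‖ = 1 + ‖y₀‖ := by
    rw [hu, show -‖y₀‖⁻¹ • y₀ - y₀ = (-(‖y₀‖⁻¹ + 1)) • y₀ by module, norm_smul, norm_neg,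
      Real.norm_of_nonneg (by positivity), add_mul, inv_mul_cancel₀ (norm_ne_zero_iff.2 h),
      one_mul]
  have hle := hF u ⟨0, mem_closedBall_self zero_le_one⟩
  rw [hdist, sub_zero] at hle
  linarith [mem_closedBall_zero_iff.1 u.2, norm_pos_iff.2 h]

variable [NormedSpace ℝ X]

theorem norm_inv_two_smul_sub_le_one (u v : closedBall (0 : X) 1) :
    ‖(2⁻¹ : ℝ) • ((u : X) - v)‖ ≤ 1 := by
  rw [norm_smul, Real.norm_of_nonneg (by norm_num)]
  linarith [norm_sub_le (u : X) v, mem_closedBall_zero_iff.1 u.2, mem_closedBall_zero_iff.1 v.2]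

theorem map_smul_of_mem_extremePoints
    (hF : ∀ u v, ‖(F u : Y) - F v‖ ≤ ‖(u : X) - v‖)
    (hF0 : (F ⟨0, mem_closedBall_self zero_le_one⟩ : Y) = 0)
    {x : closedBall (0 : X) 1}
    (hx : (F x : Y) ∈ extremePoints ℝ (closedBall (0 : Y) 1)) {a : ℝ} (ha₀ : 0 ≤ a) (ha₁ : a ≤ 1)
    (z : closedBall (0 : X) 1) (hz : (z : X) = a • x) : (F z : Y) = a • F x := by
  have hx₁ : ‖(x : X)‖ ≤ 1 := mem_closedBall_zero_iff.1 x.2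
  refine eq_smul_of_mem_extremePoints_closedBall hx ha₀ ha₁ ?_ ?_
  · calc ‖(F z : Y)‖ = ‖(F z : Y) - F ⟨0, mem_closedBall_self zero_le_one⟩‖ := by
          rw [hF0, sub_zero]
      _ ≤ ‖(z : X) - 0‖ := hF _ _
      _ = a * ‖(x : X)‖ := by rw [sub_zero, hz, norm_smul, Real.norm_of_nonneg ha₀]
      _ ≤ a := mul_le_of_le_one_right ha₀ hx₁
  · calc ‖(F x : Y) - F z‖ ≤ ‖(x : X) - z‖ := hF _ _
      _ = (1 - a) * ‖(x : X)‖ := by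
          rw [hz, show (x : X) - a • x = (1 - a) • (x : X) by module, norm_smul,
            Real.norm_of_nonneg (sub_nonneg.2 ha₁)]
      _ ≤ 1 - a := mul_le_of_le_one_right (sub_nonneg.2 ha₁) hx₁

theorem eq_neg_of_map_eq_neg
    (hF : ∀ u v, ‖(F u : Y) - F v‖ ≤ ‖(u : X) - v‖)
    (hF0 : (F ⟨0, mem_closedBall_self zero_le_one⟩ : Y) = 0)
    (hinj : Injective F) {x v : closedBall (0 : X) 1}
    (hx : (F x : Y) ∈ extremePoints ℝ (closedBall (0 : Y) 1)) (hv : (F v : Y) = -F x) :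
    (v : X) = -x := by
  let m : closedBall (0 : X) 1 :=
    ⟨(2⁻¹ : ℝ) • (x : X) + (2⁻¹ : ℝ) • (v : X),
      convex_closedBall (0 : X) 1 x.2 v.2 (by norm_num) (by norm_num) (by norm_num)⟩
  have h₁ : ‖(F x : Y) - F m‖ ≤ 1 := by
    refine (hF x m).trans ?_
    rw [show (x : X) - m = (2⁻¹ : ℝ) • ((x : X) - v) by simp only [m]; module]
    exact norm_inv_two_smul_sub_le_one x v
  have h₂ : ‖(F x : Y) + F m‖ ≤ 1 := by
    rw [add_comm, ← sub_neg_eq_add, ← hv]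
    refine (hF m v).trans ?_
    rw [show (m : X) - v = (2⁻¹ : ℝ) • ((x : X) - v) by simp only [m]; module]
    exact norm_inv_two_smul_sub_le_one x v
  have hm : (m : X) = 0 := congrArg Subtype.val <| hinj <| Subtype.ext <|
    (eq_zero_of_mem_extremePoints_closedBall hx h₂ h₁).trans hF0.symm
  linear_combination (norm := module) (2 : ℝ) • hm

end UnitBallMap

theorem nonexpansive_bijection_extreme_point_ray_general
    {X Y : Type*} [NormedAddCommGroup X] [NormedSpace ℝ X]
    [NormedAddCommGroup Y] [NormedSpace ℝ Y]
    (F : Metric.closedBall (0 : X) 1 → Metric.closedBall (0 : Y) 1)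
    (hbij : Function.Bijective F)
    (hne : ∀ u v : Metric.closedBall (0 : X) 1,
      ‖(F u : Y) - (F v : Y)‖ ≤ ‖(u : X) - (v : X)‖)
    (x : Metric.closedBall (0 : X) 1)
    (hext : (F x : Y) ∈ Set.extremePoints ℝ (Metric.closedBall (0 : Y) 1)) :
    ∀ a ∈ Set.Ioo (-1 : ℝ) 1, ∀ (ha : a • (x : X) ∈ Metric.closedBall (0 : X) 1),
      (F ⟨a • (x : X), ha⟩ : Y) = a • (F x : Y) := by
  have hF0 := map_zero_eq_zero_of_surjective hne hbij.2
  rintro a ⟨ha_gt, ha_lt⟩ ha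
  rcases le_or_gt 0 a with ha₀ | ha₀
  · exact map_smul_of_mem_extremePoints hne hF0 hext ha₀ ha_lt.le _ rfl
  obtain ⟨v, hv⟩ := hbij.2 (-F x)
  replace hv : (F v : Y) = -F x := congrArg Subtype.val hv
  have hvx := eq_neg_of_map_eq_neg hne hF0 hbij.1 hext hv
  have hextv : (F v : Y) ∈ extremePoints ℝ (closedBall (0 : Y) 1) :=
    hv ▸ neg_mem_extremePoints_closedBall hext
  rw [map_smul_of_mem_extremePoints hne hF0 hextv (neg_nonneg.2 ha₀.le) (by linarith) _
    (by rw [hvx]; module), hv, neg_smul_neg]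

theorem nonexpansive_bijection_extreme_point_ray
    {X Y : Type*} [NormedAddCommGroup X] [NormedSpace ℝ X] [CompleteSpace X]
    [NormedAddCommGroup Y] [NormedSpace ℝ Y] [CompleteSpace Y]
    (F : Metric.closedBall (0 : X) 1 → Metric.closedBall (0 : Y) 1)
    (hbij : Function.Bijective F)
    (hne : ∀ u v : Metric.closedBall (0 : X) 1,
      ‖(F u : Y) - (F v : Y)‖ ≤ ‖(u : X) - (v : X)‖)
    (x : Metric.closedBall (0 : X) 1)
    (hext : (F x : Y) ∈ Set.extremePoints ℝ (Metric.closedBall (0 : Y) 1)) :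
    ∀ a ∈ Set.Ioo (-1 : ℝ) 1, ∀ (ha : a • (x : X) ∈ Metric.closedBall (0 : X) 1),
      (F ⟨a • (x : X), ha⟩ : Y) = a • (F x : Y) :=
  nonexpansive_bijection_extreme_point_ray_general F hbij hne x hext
end

section
/- Let X, Y be real Banach spaces and F : B_X → B_Y a bijective non-expansive map with F(S_X) = S_Y. Suppose V ⊆ S_X satisfies F(a·v) = a·F(v) for all a ∈ [−1, 1] and v ∈ V. Let A = {t·x : x ∈ V, t ∈ [−1, 1]}. Then the restriction of F to A is a bijective isometry from A onto F(A). -/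
/-!
For `u, w` on the rays through `V` and `σ ∈ [0, 1]`, homogeneity gives `F(σu) = σ F u` and
`F(-σw) = -σ F w`. For a unit vector `z`, `y = F z` is a unit vector, and the triangle inequality
for `2y = (y - σ F u) + (y + σ F w) + σ (F u - F w)` together with non-expansiveness yields
`2 - ‖z - σu‖ - ‖z + σw‖ ≤ σ ‖F u - F w‖`.

It remains to make the left side almost `σ ‖u - w‖`. The Lipschitz function `s ↦ ‖(u - w) + s u‖`
is differentiable (Rademacher) at some small `τ > 0`; put `p = (u - w) + τ u` and `z = p / ‖p‖`.
With `m` that derivative, `|m| ≤ ‖u‖`. By positive homogeneity the norm is then differentiable at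
`p` along the whole plane spanned by `p` and `u`, and the left side, as a function of `σ`, vanishes
at `0` with derivative `‖p‖ - τ m ≥ ‖u - w‖ - 2τ‖u‖` there.
-/

open Metric Set Filter Topology MeasureTheory

theorem LipschitzWith.exists_differentiableAt_mem_Ioo {f : ℝ → ℝ} {C : NNReal}
    (hf : LipschitzWith C f) {a b : ℝ} (hab : a < b) :
    ∃ x ∈ Ioo a b, DifferentiableAt ℝ f x :=
  Measure.exists_mem_of_measure_ne_zero_of_ae (μ := volume) (by simpa using hab)
    (ae_restrict_of_ae hf.ae_differentiableAt)

section NormedSpace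

variable {X : Type*} [NormedAddCommGroup X] [NormedSpace ℝ X]

theorem HasDerivAt.norm_add_smul_smul_add_smul {p u : X} {m : ℝ}
    (h : HasDerivAt (fun s : ℝ => ‖p + s • u‖) m 0) (α β : ℝ) :
    HasDerivAt (fun s : ℝ => ‖p + s • (α • p + β • u)‖) (α * ‖p‖ + β * m) 0 := by
  have hscale : HasDerivAt (fun s : ℝ => 1 + s * α) α 0 := by
    simpa using ((hasDerivAt_id (0 : ℝ)).mul_const α).const_add 1
  have hslope : HasDerivAt (fun s : ℝ => s * β / (1 + s * α)) β 0 := by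
    simpa using ((hasDerivAt_id (0 : ℝ)).mul_const β).fun_div hscale (by simp)
  have hprod : HasDerivAt (fun s : ℝ => (1 + s * α) * ‖p + (s * β / (1 + s * α)) • u‖)
      (α * ‖p‖ + β * m) 0 := by
    simpa [mul_comm β m] using hscale.fun_mul (h.comp_of_eq 0 hslope (by simp))
  refine hprod.congr_of_eventuallyEq ?_
  have hpos : ∀ᶠ s : ℝ in 𝓝 0, 0 < 1 + s * α :=
    hscale.continuousAt.eventually (lt_mem_nhds (by simp))
  filter_upwards [hpos] with s hs
  have hfactor : p + s • (α • p + β • u) = (1 + s * α) • (p + (s * β / (1 + s * α)) • u) := by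
    rw [smul_add (1 + s * α), smul_smul (1 + s * α), mul_div_cancel₀ _ hs.ne']
    match_scalars <;> ring
  rw [hfactor, norm_smul, Real.norm_eq_abs, abs_of_pos hs]

theorem lipschitzWith_norm_add_smul (d u : X) :
    LipschitzWith ‖u‖₊ (fun s : ℝ => ‖d + s • u‖) :=
  LipschitzWith.of_dist_le_mul fun a b => by
    rw [Real.dist_eq, Real.dist_eq, coe_nnnorm]
    calc |‖d + a • u‖ - ‖d + b • u‖| ≤ ‖(d + a • u) - (d + b • u)‖ := abs_norm_sub_norm_le _ _
      _ = ‖u‖ * |a - b| := by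
        rw [add_sub_add_left_eq_sub, ← sub_smul, norm_smul, Real.norm_eq_abs, mul_comm]

theorem exists_mul_lt_two_sub_norm_sub_sub_norm_add {u w : X} {c : ℝ} (hc : 0 ≤ c)
    (hcuw : c < ‖u - w‖) :
    ∃ σ ∈ Ioc (0 : ℝ) 1, ∃ z ∈ sphere (0 : X) 1, σ * c < 2 - ‖z - σ • u‖ - ‖z + σ • w‖ := by
  set d := u - w
  have hk := lipschitzWith_norm_add_smul d u
  obtain ⟨τ, ⟨hτ0, hτδ⟩, hdiff⟩ :=
    hk.exists_differentiableAt_mem_Ioo (a := 0) (b := (‖d‖ - c) / (2 * ‖u‖ + 1))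
      (div_pos (by linarith) (by positivity))
  have hτ : 2 * τ * ‖u‖ < ‖d‖ - c := by
    rw [lt_div_iff₀ (by positivity)] at hτδ
    nlinarith
  set m := deriv (fun s : ℝ => ‖d + s • u‖) τ
  have hm : m ≤ ‖u‖ := (le_abs_self m).trans (by simpa using norm_deriv_le_of_lipschitz hk)
  set p := d + τ • u
  have hp : HasDerivAt (fun s : ℝ => ‖p + s • u‖) m 0 := by
    have h := HasDerivAt.comp_const_add τ 0 (by rw [add_zero]; exact hdiff.hasDerivAt)
    simp only [add_smul, ← add_assoc] at h
    exact h
  set K := ‖p‖ with hKdef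
  have hK : ‖d‖ - τ * ‖u‖ ≤ K := by
    have := norm_sub_le p (τ • u)
    rw [add_sub_cancel_right, norm_smul, Real.norm_of_nonneg hτ0.le] at this
    linarith
  have hK0 : 0 < K := by nlinarith
  have hslope : c < K - τ * m := by nlinarith
  set z := K⁻¹ • p
  have hz : ‖z‖ = 1 := by
    rw [norm_smul, norm_inv, norm_norm, inv_mul_cancel₀ hK0.ne']
  have hderiv : HasDerivAt (fun σ : ℝ => 2 - ‖z - σ • u‖ - ‖z + σ • w‖) (K - τ * m) 0 := by
    have hderiv_u := hp.norm_add_smul_smul_add_smul 0 (-K)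
    have hderiv_w := hp.norm_add_smul_smul_add_smul (-K) (K * (1 + τ))
    have hφ_eq : (fun σ : ℝ => 2 - ‖z - σ • u‖ - ‖z + σ • w‖) = fun σ : ℝ =>
        2 - K⁻¹ * ‖p + σ • ((0 : ℝ) • p + (-K) • u)‖
          - K⁻¹ * ‖p + σ • ((-K) • p + (K * (1 + τ)) • u)‖ := by
      have hw_eq : w = (1 + τ) • u - p := by simp only [p, d]; match_scalars <;> ring
      have hscale : ∀ v : X, K⁻¹ * ‖v‖ = ‖K⁻¹ • v‖ := fun v => by
        rw [norm_smul, Real.norm_of_nonneg (inv_nonneg.2 hK0.le)]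
      funext σ
      rw [hscale, hscale]
      congr 3 <;> simp only [z, hw_eq] <;> match_scalars <;> field_simp <;> ring
    rw [hφ_eq]
    refine (((hderiv_u.const_mul K⁻¹).const_sub 2).sub (hderiv_w.const_mul K⁻¹)).congr_deriv ?_
    rw [← hKdef]
    field_simp
    ring
  obtain ⟨σ, hσc, hσ⟩ := ((hderiv.tendsto_slope_zero_right.eventually (lt_mem_nhds hslope)).and
    (Ioc_mem_nhdsGT one_pos)).exists
  refine ⟨σ, hσ, z, by simpa using hz, ?_⟩
  simp only [zero_add, zero_smul, sub_zero, add_zero, hz, smul_eq_mul] at hσc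
  rw [lt_inv_mul_iff₀ hσ.1] at hσc
  norm_num at hσc
  linarith

theorem two_mul_norm_sub_norm_sub_sub_norm_add_le (y a b : X) :
    2 * ‖y‖ - ‖y - a‖ - ‖y + b‖ ≤ ‖a - b‖ := by
  have h2y : (y - a) + (y + b) + (a - b) = (2 : ℝ) • y := by rw [two_smul]; abel
  have := norm_add₃_le (a := y - a) (b := y + b) (c := a - b)
  rw [h2y, norm_smul, Real.norm_two] at this
  linarith

end NormedSpace

theorem mul_mem_Icc_neg_one_one {a b : ℝ} (ha : a ∈ Icc (-1 : ℝ) 1) (hb : b ∈ Icc (-1 : ℝ) 1) :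
    a * b ∈ Icc (-1 : ℝ) 1 := by
  simp only [mem_Icc, ← abs_le, abs_mul] at *
  exact mul_le_one₀ ha (abs_nonneg b) hb

section BallMap

variable {X Y : Type*} [NormedAddCommGroup X] [NormedSpace ℝ X]
  [NormedAddCommGroup Y] [NormedSpace ℝ Y]
  {F : closedBall (0 : X) 1 → closedBall (0 : Y) 1} {V : Set X}

theorem smul_mem_closedBall_zero_one {a : ℝ} (ha : a ∈ Icc (-1 : ℝ) 1) {x : X}
    (hx : x ∈ closedBall (0 : X) 1) : a • x ∈ closedBall (0 : X) 1 := by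
  rw [mem_closedBall_zero_iff, norm_smul] at *
  exact mul_le_one₀ (abs_le.2 ha) (norm_nonneg x) hx

theorem map_smul_of_mem_rays (hV : V ⊆ sphere (0 : X) 1)
    (hhom : ∀ v ∈ V, ∀ a ∈ Icc (-1 : ℝ) 1,
      ∀ (hav : a • v ∈ closedBall (0 : X) 1) (hv1 : v ∈ closedBall (0 : X) 1),
      (F ⟨a • v, hav⟩ : Y) = a • (F ⟨v, hv1⟩ : Y))
    {u : closedBall (0 : X) 1} (hu : ∃ x ∈ V, ∃ t ∈ Icc (-1 : ℝ) 1, (u : X) = t • x)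
    {a : ℝ} (ha : a ∈ Icc (-1 : ℝ) 1) (hau : a • (u : X) ∈ closedBall (0 : X) 1) :
    (F ⟨a • u, hau⟩ : Y) = a • (F u : Y) := by
  obtain ⟨u, hu1⟩ := u
  obtain ⟨x, hx, t, ht, rfl⟩ := hu
  have hx1 := sphere_subset_closedBall (hV hx)
  simp only [smul_smul] at hau ⊢
  rw [hhom x hx _ (mul_mem_Icc_neg_one_one ha ht) hau hx1, hhom x hx t ht hu1 hx1, mul_smul]

theorem two_sub_norm_sub_sub_norm_add_le_mul_norm_sub
    (hne : ∀ u v : closedBall (0 : X) 1, ‖(F u : Y) - (F v : Y)‖ ≤ ‖(u : X) - (v : X)‖)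
    (hsph : ∀ z : closedBall (0 : X) 1, ‖(z : X)‖ = 1 → ‖(F z : Y)‖ = 1)
    (hV : V ⊆ sphere (0 : X) 1)
    (hhom : ∀ v ∈ V, ∀ a ∈ Icc (-1 : ℝ) 1,
      ∀ (hav : a • v ∈ closedBall (0 : X) 1) (hv1 : v ∈ closedBall (0 : X) 1),
      (F ⟨a • v, hav⟩ : Y) = a • (F ⟨v, hv1⟩ : Y))
    {u w : closedBall (0 : X) 1} (hu : ∃ x ∈ V, ∃ t ∈ Icc (-1 : ℝ) 1, (u : X) = t • x)
    (hw : ∃ x ∈ V, ∃ t ∈ Icc (-1 : ℝ) 1, (w : X) = t • x)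
    {z : closedBall (0 : X) 1} (hz : ‖(z : X)‖ = 1) {σ : ℝ} (hσ : σ ∈ Icc (0 : ℝ) 1) :
    2 - ‖(z : X) - σ • (u : X)‖ - ‖(z : X) + σ • (w : X)‖ ≤ σ * ‖(F u : Y) - (F w : Y)‖ := by
  have hσ' : σ ∈ Icc (-1 : ℝ) 1 := ⟨by linarith [hσ.1], hσ.2⟩
  have hσ'' : -σ ∈ Icc (-1 : ℝ) 1 := ⟨by linarith [hσ.2], by linarith [hσ.1]⟩
  have hσu := smul_mem_closedBall_zero_one hσ' u.2
  have hσw := smul_mem_closedBall_zero_one hσ'' w.2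
  have hFu := map_smul_of_mem_rays hV hhom hu hσ' hσu
  have hFw := map_smul_of_mem_rays hV hhom hw hσ'' hσw
  have h1 := hne z ⟨_, hσu⟩
  have h2 := hne z ⟨_, hσw⟩
  rw [hFu] at h1
  rw [hFw] at h2
  simp only [neg_smul, sub_neg_eq_add] at h2
  calc 2 - ‖(z : X) - σ • (u : X)‖ - ‖(z : X) + σ • (w : X)‖
      ≤ 2 * ‖(F z : Y)‖ - ‖(F z : Y) - σ • (F u : Y)‖ - ‖(F z : Y) + σ • (F w : Y)‖ := by
        rw [hsph z hz]; linarith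
    _ ≤ ‖σ • (F u : Y) - σ • (F w : Y)‖ := two_mul_norm_sub_norm_sub_sub_norm_add_le _ _ _
    _ = σ * ‖(F u : Y) - (F w : Y)‖ := by
        rw [← smul_sub, norm_smul, Real.norm_of_nonneg hσ.1]

end BallMap

theorem nonexpansive_bijection_isometry_on_rays_general
    {X Y : Type*} [NormedAddCommGroup X] [NormedSpace ℝ X]
    [NormedAddCommGroup Y] [NormedSpace ℝ Y]
    (F : Metric.closedBall (0 : X) 1 → Metric.closedBall (0 : Y) 1)
    (hne : ∀ u v : Metric.closedBall (0 : X) 1,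
      ‖(F u : Y) - (F v : Y)‖ ≤ ‖(u : X) - (v : X)‖)
    (hsph : (fun u : Metric.closedBall (0 : X) 1 => (F u : Y)) ''
        {u : Metric.closedBall (0 : X) 1 | ‖(u : X)‖ = 1} = Metric.sphere (0 : Y) 1)
    (V : Set X) (hV : V ⊆ Metric.sphere (0 : X) 1)
    (hhom : ∀ v ∈ V, ∀ a ∈ Set.Icc (-1 : ℝ) 1,
      ∀ (hav : a • v ∈ Metric.closedBall (0 : X) 1)
        (hv1 : v ∈ Metric.closedBall (0 : X) 1),
      (F ⟨a • v, hav⟩ : Y) = a • (F ⟨v, hv1⟩ : Y)) :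
    ∀ u w : Metric.closedBall (0 : X) 1,
      (u : X) ∈ {p : X | ∃ x ∈ V, ∃ t ∈ Set.Icc (-1 : ℝ) 1, p = t • x} →
      (w : X) ∈ {p : X | ∃ x ∈ V, ∃ t ∈ Set.Icc (-1 : ℝ) 1, p = t • x} →
      ‖(F u : Y) - (F w : Y)‖ = ‖(u : X) - (w : X)‖ := by
  have hnorm_one : ∀ z : closedBall (0 : X) 1, ‖(z : X)‖ = 1 → ‖(F z : Y)‖ = 1 := fun z hz => by
    simpa using hsph.subset ⟨z, hz, rfl⟩
  intro u w hu hw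
  refine le_antisymm (hne u w) (le_of_not_gt fun hlt => ?_)
  obtain ⟨σ, hσ, z, hz, hσz⟩ := exists_mul_lt_two_sub_norm_sub_sub_norm_add (norm_nonneg _) hlt
  have hle := two_sub_norm_sub_sub_norm_add_le_mul_norm_sub (z := ⟨z, sphere_subset_closedBall hz⟩)
    hne hnorm_one hV hhom hu hw (mem_sphere_zero_iff_norm.1 hz) (Ioc_subset_Icc_self hσ)
  linarith

theorem nonexpansive_bijection_isometry_on_rays
    {X Y : Type*} [NormedAddCommGroup X] [NormedSpace ℝ X] [CompleteSpace X]
    [NormedAddCommGroup Y] [NormedSpace ℝ Y] [CompleteSpace Y]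
    (F : Metric.closedBall (0 : X) 1 → Metric.closedBall (0 : Y) 1)
    (hbij : Function.Bijective F)
    (hne : ∀ u v : Metric.closedBall (0 : X) 1,
      ‖(F u : Y) - (F v : Y)‖ ≤ ‖(u : X) - (v : X)‖)
    (hsph : (fun u : Metric.closedBall (0 : X) 1 => (F u : Y)) ''
        {u : Metric.closedBall (0 : X) 1 | ‖(u : X)‖ = 1} = Metric.sphere (0 : Y) 1)
    (V : Set X) (hV : V ⊆ Metric.sphere (0 : X) 1)
    (hhom : ∀ v ∈ V, ∀ a ∈ Set.Icc (-1 : ℝ) 1,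
      ∀ (hav : a • v ∈ Metric.closedBall (0 : X) 1)
        (hv1 : v ∈ Metric.closedBall (0 : X) 1),
      (F ⟨a • v, hav⟩ : Y) = a • (F ⟨v, hv1⟩ : Y)) :
    ∀ u w : Metric.closedBall (0 : X) 1,
      (u : X) ∈ {p : X | ∃ x ∈ V, ∃ t ∈ Set.Icc (-1 : ℝ) 1, p = t • x} →
      (w : X) ∈ {p : X | ∃ x ∈ V, ∃ t ∈ Set.Icc (-1 : ℝ) 1, p = t • x} →
      ‖(F u : Y) - (F w : Y)‖ = ‖(u : X) - (w : X)‖ :=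
  nonexpansive_bijection_isometry_on_rays_general F hne hsph V hV hhom
end

section
/- Let X, Y be real Banach spaces and F : B_X → B_Y a bijective non-expansive map such that for every v ∈ F⁻¹(S_Y) and every t ∈ [−1, 1] one has F(t·v) = t·F(v). Then F is an isometry: ‖F(u) − F(v)‖ = ‖u − v‖ for all u, v ∈ B_X. -/
open Metric Set MeasureTheory

/-!
Bijectivity and homogeneity on `F⁻¹(S_Y)` make `F` equivariant for the scalars in `[-1, 1]` and
norm-preserving. For `‖u - v‖ ≤ ‖F u - F v‖`, take `w` in the plane `S` spanned by `u` and `v`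
at which the norm of `S` is differentiable, with derivative `L`, and a norming functional `g` of
`F w`. Non-expansiveness applied to `F (t • x)` and `F (-w) = -F w` gives `g (F x) ≤ L x` for
`x ∈ S`, hence `L (u - v) ≤ g (F u - F v) ≤ ‖F u - F v‖`. By Rademacher's theorem such `w` are
dense in `S`, and `L (u - v) ≥ c ‖w‖ - ‖c • w - (u - v)‖` tends to `‖u - v‖` as `w → (u - v) / c`.
-/

theorem ContinuousLinearMap.apply_le_norm_of_norm_le_one {E : Type*} [SeminormedAddCommGroup E]
    [NormedSpace ℝ E] {f : StrongDual ℝ E} (hf : ‖f‖ ≤ 1) (x : E) : f x ≤ ‖x‖ := by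
  simpa [Real.norm_eq_abs] using (le_abs_self (f x)).trans (f.le_of_opNorm_le hf x)

theorem dense_setOf_differentiableAt_norm (E : Type*) [NormedAddCommGroup E] [NormedSpace ℝ E]
    [FiniteDimensional ℝ E] : Dense {x : E | DifferentiableAt ℝ (‖·‖) x} := by
  borelize E
  exact Measure.dense_of_ae (lipschitzWith_one_norm.ae_differentiableAt (μ := Measure.addHaar))

section

variable {X Y : Type*} [NormedAddCommGroup X] [NormedSpace ℝ X]
  [NormedAddCommGroup Y] [NormedSpace ℝ Y] {F : closedBall (0 : X) 1 → closedBall (0 : Y) 1}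

theorem exists_smul_eq_of_map_ne_zero (hF : Function.Bijective F)
    (hhom : ∀ v, ‖(F v : Y)‖ = 1 → ∀ c : closedBall (0 : ℝ) 1, F (c • v) = c • F v)
    {x : closedBall (0 : X) 1} (hx : (F x : Y) ≠ 0) :
    ∃ (c : closedBall (0 : ℝ) 1) (w : closedBall (0 : X) 1), ‖(F w : Y)‖ = 1 ∧ c • w = x := by
  have hFx : ‖(F x : Y)‖ ≠ 0 := norm_ne_zero_iff.mpr hx
  obtain ⟨w, hw⟩ := hF.2 ⟨‖(F x : Y)‖⁻¹ • (F x : Y),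
    mem_closedBall_zero_iff.mpr (norm_smul_inv_norm hx).le⟩
  have hFw : ‖(F w : Y)‖ = 1 := by rw [hw]; exact norm_smul_inv_norm hx
  refine ⟨⟨‖(F x : Y)‖, by simpa using mem_closedBall_zero_iff.mp (F x).2⟩, w, hFw, hF.1 ?_⟩
  rw [hhom w hFw, hw]
  ext
  exact smul_inv_smul₀ hFx _

theorem coe_eq_zero_of_map_eq_zero (hF : Function.Bijective F)
    (hhom : ∀ v, ‖(F v : Y)‖ = 1 → ∀ c : closedBall (0 : ℝ) 1, F (c • v) = c • F v)
    {x : closedBall (0 : X) 1} (hx : (F x : Y) = 0) : (x : X) = 0 := by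
  let o : closedBall (0 : X) 1 := ⟨0, by simp⟩
  have ho : (F o : Y) = 0 := by
    by_contra h
    obtain ⟨-, w, hw, -⟩ := exists_smul_eq_of_map_ne_zero hF hhom h
    have hzero : (0 : closedBall (0 : ℝ) 1) • w = o := Subtype.ext (zero_smul ℝ (w : X))
    refine h ?_
    rw [← hzero, hhom w hw]
    exact zero_smul ℝ (F w : Y)
  exact congrArg Subtype.val (hF.1 (Subtype.ext (hx.trans ho.symm)) : x = o)

theorem map_smul_of_homogeneous_on_sphere_preimage (hF : Function.Bijective F)
    (hhom : ∀ v, ‖(F v : Y)‖ = 1 → ∀ c : closedBall (0 : ℝ) 1, F (c • v) = c • F v)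
    (c : closedBall (0 : ℝ) 1) (x : closedBall (0 : X) 1) : F (c • x) = c • F x := by
  by_cases hx : (F x : Y) = 0
  · have hcx : c • x = x := Subtype.ext <| by
      change (c : ℝ) • (x : X) = x
      rw [coe_eq_zero_of_map_eq_zero hF hhom hx, smul_zero]
    rw [hcx]
    ext
    change (F x : Y) = (c : ℝ) • (F x : Y)
    rw [hx, smul_zero]
  · obtain ⟨s, w, hw, rfl⟩ := exists_smul_eq_of_map_ne_zero hF hhom hx
    calc F (c • s • w) = F ((c * s) • w) := congrArg F (mul_smul c s w).symm
      _ = c • s • F w := by rw [hhom w hw]; exact mul_smul c s (F w)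
      _ = c • F (s • w) := by rw [hhom w hw]

theorem norm_eq_one_of_norm_map_eq_one (hne : ∀ u v, ‖(F u : Y) - F v‖ ≤ ‖(u : X) - v‖)
    (hsmul : ∀ (c : closedBall (0 : ℝ) 1) x, F (c • x) = c • F x)
    {w : closedBall (0 : X) 1} (hw : ‖(F w : Y)‖ = 1) : ‖(w : X)‖ = 1 := by
  let m : closedBall (0 : ℝ) 1 := ⟨-1, by simp⟩
  have h := hne w (m • w)
  rw [hsmul] at h
  change ‖(F w : Y) - (-1 : ℝ) • (F w : Y)‖ ≤ ‖(w : X) - (-1 : ℝ) • (w : X)‖ at h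
  simp only [neg_one_smul, sub_neg_eq_add, ← two_smul ℝ, norm_smul, hw] at h
  have := mem_closedBall_zero_iff.mp w.2
  norm_num at h
  linarith

theorem norm_map_of_homogeneous_on_sphere_preimage (hF : Function.Bijective F)
    (hne : ∀ u v, ‖(F u : Y) - F v‖ ≤ ‖(u : X) - v‖)
    (hhom : ∀ v, ‖(F v : Y)‖ = 1 → ∀ c : closedBall (0 : ℝ) 1, F (c • v) = c • F v)
    (x : closedBall (0 : X) 1) : ‖(F x : Y)‖ = ‖(x : X)‖ := by
  by_cases hx : (F x : Y) = 0
  · rw [hx, coe_eq_zero_of_map_eq_zero hF hhom hx, norm_zero, norm_zero]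
  · obtain ⟨c, w, hw, rfl⟩ := exists_smul_eq_of_map_ne_zero hF hhom hx
    have hw1 := norm_eq_one_of_norm_map_eq_one hne
      (map_smul_of_homogeneous_on_sphere_preimage hF hhom) hw
    rw [hhom w hw]
    change ‖(c : ℝ) • (F w : Y)‖ = ‖(c : ℝ) • (w : X)‖
    rw [norm_smul, norm_smul, hw, hw1]

theorem apply_map_le_of_hasLineDerivAt_norm (hne : ∀ u v, ‖(F u : Y) - F v‖ ≤ ‖(u : X) - v‖)
    (hsmul : ∀ (c : closedBall (0 : ℝ) 1) x, F (c • x) = c • F x)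
    {w x : closedBall (0 : X) 1} {g : StrongDual ℝ Y} (hg : ‖g‖ ≤ 1)
    (hgw : g (F w) = ‖(w : X)‖) {d : ℝ} (hd : HasLineDerivAt ℝ (‖·‖) d (w : X) (x : X)) :
    g (F x) ≤ d := by
  refine ge_of_tendsto (hd.tendsto_slope_zero.mono_left (nhdsGT_le_nhdsNE 0)) ?_
  filter_upwards [Ioc_mem_nhdsGT zero_lt_one] with t ⟨ht0, ht1⟩
  let c : closedBall (0 : ℝ) 1 := ⟨t, by simp [abs_of_pos ht0, ht1]⟩
  let m : closedBall (0 : ℝ) 1 := ⟨-1, by simp⟩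
  have key : t * g (F x) + ‖(w : X)‖ ≤ ‖(w : X) + t • (x : X)‖ := calc
    t * g (F x) + ‖(w : X)‖ = g (F (c • x) - F (m • w)) := by
        rw [hsmul, hsmul]
        change _ = g ((t : ℝ) • (F x : Y) - (-1 : ℝ) • (F w : Y))
        rw [map_sub, map_smul, map_smul, hgw, smul_eq_mul, smul_eq_mul]
        ring
    _ ≤ ‖(F (c • x) : Y) - F (m • w)‖ := g.apply_le_norm_of_norm_le_one hg _
    _ ≤ ‖((c • x : closedBall (0 : X) 1) : X) - (m • w : closedBall (0 : X) 1)‖ := hne _ _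
    _ = ‖(w : X) + t • (x : X)‖ := by
        change ‖t • (x : X) - (-1 : ℝ) • (w : X)‖ = _
        rw [neg_one_smul, sub_neg_eq_add, add_comm]
  rw [smul_eq_mul, le_inv_mul_iff₀ ht0]
  linarith

theorem sub_le_norm_map_sub_of_hasLineDerivAt_norm
    (hne : ∀ u v, ‖(F u : Y) - F v‖ ≤ ‖(u : X) - v‖)
    (hsmul : ∀ (c : closedBall (0 : ℝ) 1) x, F (c • x) = c • F x)
    (hnorm : ∀ x, ‖(F x : Y)‖ = ‖(x : X)‖) {w u v : closedBall (0 : X) 1} {du dv : ℝ}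
    (hu : HasLineDerivAt ℝ (‖·‖) du (w : X) (u : X))
    (hv : HasLineDerivAt ℝ (‖·‖) dv (w : X) (v : X)) :
    du - dv ≤ ‖(F u : Y) - F v‖ := by
  obtain ⟨g, hg, hgw⟩ := exists_dual_vector'' ℝ (F w : Y)
  replace hgw : g (F w) = ‖(w : X)‖ := by rw [hgw, hnorm]; rfl
  let m : closedBall (0 : ℝ) 1 := ⟨-1, by simp⟩
  have hmu : -g (F u) ≤ -du := by
    have h := apply_map_le_of_hasLineDerivAt_norm hne hsmul hg hgw (x := m • u)
      (hu.smul (-1))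
    rwa [hsmul, show ((m • F u : closedBall (0 : Y) 1) : Y) = -(F u : Y) from neg_one_smul ℝ _,
      map_neg, neg_one_smul] at h
  have hv' := apply_map_le_of_hasLineDerivAt_norm hne hsmul hg hgw hv
  calc du - dv ≤ g (F u - F v) := by rw [map_sub]; linarith
    _ ≤ ‖(F u : Y) - F v‖ := g.apply_le_norm_of_norm_le_one hg _

theorem mul_norm_sub_norm_sub_le_norm_map_sub (hne : ∀ u v, ‖(F u : Y) - F v‖ ≤ ‖(u : X) - v‖)
    (hsmul : ∀ (c : closedBall (0 : ℝ) 1) x, F (c • x) = c • F x)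
    (hnorm : ∀ x, ‖(F x : Y)‖ = ‖(x : X)‖) {S : Submodule ℝ X} {u v : closedBall (0 : X) 1}
    (hu : (u : X) ∈ S) (hv : (v : X) ∈ S) {w : S} (hdiff : DifferentiableAt ℝ (‖·‖) w)
    (hw : ‖w‖ ≤ 1) (c : ℝ) :
    c * ‖w‖ - ‖c • w - ⟨u - v, S.sub_mem hu hv⟩‖ ≤ ‖(F u : Y) - F v‖ := by
  set L := fderiv ℝ (‖·‖) w
  have hline (y : S) : HasLineDerivAt ℝ (‖·‖) (L y) (w : X) y :=
    hdiff.hasFDerivAt.hasLineDerivAt y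
  have hL : ‖L‖ ≤ 1 := by
    simpa using norm_fderiv_le_of_lipschitz ℝ (x₀ := w) (lipschitzWith_one_norm (E := S))
  calc c * ‖w‖ - ‖c • w - ⟨u - v, S.sub_mem hu hv⟩‖
      ≤ L (c • w) - L (c • w - ⟨u - v, S.sub_mem hu hv⟩) := by
        rw [map_smul, hdiff.fderiv_norm_self, smul_eq_mul]
        linarith [L.apply_le_norm_of_norm_le_one hL (c • w - ⟨u - v, S.sub_mem hu hv⟩)]
    _ = L ⟨u, hu⟩ - L ⟨v, hv⟩ := by
        rw [← map_sub, ← map_sub, sub_sub_cancel]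
        rfl
    _ ≤ ‖(F u : Y) - F v‖ :=
        sub_le_norm_map_sub_of_hasLineDerivAt_norm hne hsmul hnorm
          (w := ⟨w, mem_closedBall_zero_iff.mpr hw⟩) (hline _) (hline _)

theorem norm_sub_le_norm_map_sub (hne : ∀ u v, ‖(F u : Y) - F v‖ ≤ ‖(u : X) - v‖)
    (hsmul : ∀ (c : closedBall (0 : ℝ) 1) x, F (c • x) = c • F x)
    (hnorm : ∀ x, ‖(F x : Y)‖ = ‖(x : X)‖) (u v : closedBall (0 : X) 1) :
    ‖(u : X) - v‖ ≤ ‖(F u : Y) - F v‖ := by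
  let S := Submodule.span ℝ {(u : X), (v : X)}
  have hu : (u : X) ∈ S := Submodule.subset_span (by simp)
  have hv : (v : X) ∈ S := Submodule.subset_span (by simp)
  have : FiniteDimensional ℝ S := FiniteDimensional.span_of_finite ℝ (toFinite _)
  set z : S := ⟨u - v, S.sub_mem hu hv⟩
  -- `‖z‖ ≤ 2 < 3`, so `z / 3` lies in the open unit ball of `S`, and `φ (z / 3) = ‖z‖`.
  set φ : S → ℝ := fun w => 3 * ‖w‖ - ‖(3 : ℝ) • w - z‖
  have hφ : ball (0 : S) 1 ⊆ {w | φ w ≤ ‖(F u : Y) - F v‖} := by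
    refine ((dense_setOf_differentiableAt_norm S).open_subset_closure_inter isOpen_ball).trans ?_
    refine closure_minimal ?_ (isClosed_le (by fun_prop) continuous_const)
    rintro w ⟨hw, hdiff⟩
    exact mul_norm_sub_norm_sub_le_norm_map_sub hne hsmul hnorm hu hv hdiff
      (mem_ball_zero_iff.mp hw).le 3
  have hz : ‖z‖ < 3 := calc
    ‖z‖ ≤ ‖(u : X)‖ + ‖(v : X)‖ := norm_sub_le _ _
    _ ≤ 1 + 1 := add_le_add (mem_closedBall_zero_iff.mp u.2) (mem_closedBall_zero_iff.mp v.2)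
    _ < 3 := by norm_num
  have h := hφ (show (3 : ℝ)⁻¹ • z ∈ ball (0 : S) 1 by
    rw [mem_ball_zero_iff, norm_smul, Real.norm_of_nonneg (by norm_num)]
    linarith)
  simpa [φ, smul_smul, norm_smul] using h

end

theorem nonexpansive_bijection_isometry_of_homogeneous_on_sphere_preimage_general
    {X Y : Type*} [NormedAddCommGroup X] [NormedSpace ℝ X]
    [NormedAddCommGroup Y] [NormedSpace ℝ Y]
    (F : Metric.closedBall (0 : X) 1 → Metric.closedBall (0 : Y) 1)
    (hbij : Function.Bijective F)
    (hne : ∀ u v : Metric.closedBall (0 : X) 1,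
      ‖(F u : Y) - (F v : Y)‖ ≤ ‖(u : X) - (v : X)‖)
    (hhom : ∀ v : Metric.closedBall (0 : X) 1, ‖(F v : Y)‖ = 1 →
      ∀ t ∈ Set.Icc (-1 : ℝ) 1, ∀ (htv : t • (v : X) ∈ Metric.closedBall (0 : X) 1),
        (F ⟨t • (v : X), htv⟩ : Y) = t • (F v : Y)) :
    ∀ u v : Metric.closedBall (0 : X) 1,
      ‖(F u : Y) - (F v : Y)‖ = ‖(u : X) - (v : X)‖ := by
  have hhom' (v : closedBall (0 : X) 1) (hv : ‖(F v : Y)‖ = 1) (c : closedBall (0 : ℝ) 1) :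
      F (c • v) = c • F v :=
    Subtype.ext <| hhom v hv c (by simpa [Real.closedBall_eq_Icc] using c.2) _
  have hsmul := map_smul_of_homogeneous_on_sphere_preimage hbij hhom'
  have hnorm := norm_map_of_homogeneous_on_sphere_preimage hbij hne hhom'
  exact fun u v => (hne u v).antisymm (norm_sub_le_norm_map_sub hne hsmul hnorm u v)

theorem nonexpansive_bijection_isometry_of_homogeneous_on_sphere_preimage
    {X Y : Type*} [NormedAddCommGroup X] [NormedSpace ℝ X] [CompleteSpace X]
    [NormedAddCommGroup Y] [NormedSpace ℝ Y] [CompleteSpace Y]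
    (F : Metric.closedBall (0 : X) 1 → Metric.closedBall (0 : Y) 1)
    (hbij : Function.Bijective F)
    (hne : ∀ u v : Metric.closedBall (0 : X) 1,
      ‖(F u : Y) - (F v : Y)‖ ≤ ‖(u : X) - (v : X)‖)
    (hhom : ∀ v : Metric.closedBall (0 : X) 1, ‖(F v : Y)‖ = 1 →
      ∀ t ∈ Set.Icc (-1 : ℝ) 1, ∀ (htv : t • (v : X) ∈ Metric.closedBall (0 : X) 1),
        (F ⟨t • (v : X), htv⟩ : Y) = t • (F v : Y)) :
    ∀ u v : Metric.closedBall (0 : X) 1,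
      ‖(F u : Y) - (F v : Y)‖ = ‖(u : X) - (v : X)‖ :=
  nonexpansive_bijection_isometry_of_homogeneous_on_sphere_preimage_general F hbij hne hhom
end

section
/- Let X, Y be real Banach spaces and F : B_X → B_Y a bijective non-expansive map such that for every v ∈ F⁻¹(S_Y) and every t ∈ [−1, 1] one has F(t·v) = t·F(v). Then F maps S_X onto S_Y. -/
theorem nonexpansive_bijection_maps_sphere_onto_sphere
    {X Y : Type*} [NormedAddCommGroup X] [NormedSpace ℝ X] [CompleteSpace X]
    [NormedAddCommGroup Y] [NormedSpace ℝ Y] [CompleteSpace Y]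
    (F : Metric.closedBall (0 : X) 1 → Metric.closedBall (0 : Y) 1)
    (hbij : Function.Bijective F)
    (hne : ∀ u v : Metric.closedBall (0 : X) 1,
      ‖(F u : Y) - (F v : Y)‖ ≤ ‖(u : X) - (v : X)‖)
    (hhom : ∀ v : Metric.closedBall (0 : X) 1, ‖(F v : Y)‖ = 1 →
      ∀ t ∈ Set.Icc (-1 : ℝ) 1, ∀ (htv : t • (v : X) ∈ Metric.closedBall (0 : X) 1),
        (F ⟨t • (v : X), htv⟩ : Y) = t • (F v : Y)) :
    (fun u : Metric.closedBall (0 : X) 1 => (F u : Y)) ''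
      {u : Metric.closedBall (0 : X) 1 | ‖(u : X)‖ = 1} = Metric.sphere (0 : Y) 1 := by
  have h0b : (0:X) ∈ Metric.closedBall (0:X) 1 := by simp
  by_cases hY : ∃ y : Y, ‖y‖ = 1
  · obtain ⟨y, hy⟩ := hY
    have hyb : y ∈ Metric.closedBall (0:Y) 1 := by simp [hy]
    obtain ⟨v, hv⟩ := hbij.2 ⟨y, hyb⟩
    have hFv : ‖(F v : Y)‖ = 1 := by rw [hv]; exact hy
    have hF0 : (F ⟨0, h0b⟩ : Y) = 0 := by
      have h := hhom v hFv 0 (by constructor <;> norm_num) (by simp)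
      simpa using h
    have hpre : ∀ u : Metric.closedBall (0:X) 1, ‖(F u : Y)‖ = 1 → ‖(u:X)‖ = 1 := by
      intro u hu
      have h1 : (1:ℝ) ≤ ‖(u:X)‖ := by
        have := hne u ⟨0, h0b⟩
        rw [hF0] at this
        simpa [hu] using this
      have h2 : ‖(u:X)‖ ≤ 1 := by
        exact mem_closedBall_zero_iff.mp u.2
      linarith
    ext z
    simp only [Set.mem_image, Set.mem_setOf_eq, Metric.mem_sphere, dist_zero_right]
    constructor
    · rintro ⟨u, hu, rfl⟩
      by_contra hne1
      have hFu0 : (F u : Y) ≠ 0 := by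
        intro h0
        have : u = ⟨0, h0b⟩ := hbij.1 (by apply Subtype.ext; rw [h0, hF0])
        rw [this] at hu; simp at hu
      have hub : ‖(F u : Y)‖ ≤ 1 := by
        exact mem_closedBall_zero_iff.mp (F u).2
      have hr : ‖(F u : Y)‖ < 1 := lt_of_le_of_ne hub hne1
      set r := ‖(F u : Y)‖ with hrdef
      have hrpos : 0 < r := norm_pos_iff.mpr hFu0
      have heb : r⁻¹ • (F u : Y) ∈ Metric.closedBall (0:Y) 1 := by
        rw [mem_closedBall_zero_iff, norm_smul, Real.norm_eq_abs, abs_of_pos (inv_pos.mpr hrpos),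
          ← hrdef, inv_mul_cancel₀ hrpos.ne']
      obtain ⟨w, hw⟩ := hbij.2 ⟨r⁻¹ • (F u : Y), heb⟩
      have hFw : ‖(F w : Y)‖ = 1 := by
        rw [hw]
        show ‖r⁻¹ • (F u : Y)‖ = 1
        rw [norm_smul, Real.norm_eq_abs, abs_of_pos (inv_pos.mpr hrpos),
          ← hrdef, inv_mul_cancel₀ hrpos.ne']
      have hwn : ‖(w:X)‖ = 1 := hpre w hFw
      have hrw : r • (w:X) ∈ Metric.closedBall (0:X) 1 := by
        simp only [Metric.mem_closedBall, dist_zero_right, norm_smul, hwn,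
          Real.norm_eq_abs, abs_of_pos hrpos, mul_one]
        linarith
      have hkey := hhom w hFw r ⟨by linarith, le_of_lt hr⟩ hrw
      rw [hw] at hkey
      have hFeq : (F ⟨r • (w:X), hrw⟩ : Y) = (F u : Y) := by
        rw [hkey]; simp [smul_smul, mul_inv_cancel₀ hrpos.ne']
      have heq : (⟨r • (w:X), hrw⟩ : Metric.closedBall (0:X) 1) = u :=
        hbij.1 (Subtype.ext hFeq)
      have hun : ‖(u:X)‖ = r := by
        rw [← heq]
        simp [norm_smul, abs_of_pos hrpos, hwn]
      rw [hu] at hun; linarith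
    · intro hz
      obtain ⟨u, hu⟩ := hbij.2 ⟨z, by simp [hz]⟩
      refine ⟨u, ?_, by rw [hu]⟩
      apply hpre
      rw [hu]; exact hz
  · push_neg at hY
    have hY0 : ∀ y : Y, y = 0 := by
      intro y
      by_contra h
      exact absurd (by simp [norm_smul, inv_mul_cancel₀ (norm_ne_zero_iff.mpr h)] :
        ‖‖y‖⁻¹ • y‖ = 1) (hY _)
    ext z
    simp only [Set.mem_image, Set.mem_setOf_eq, Metric.mem_sphere, dist_zero_right]
    constructor
    · rintro ⟨u, hu, rfl⟩
      exfalso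
      have : u = ⟨0, h0b⟩ :=
        hbij.1 (Subtype.ext (by rw [hY0 (F u : Y), hY0 (F ⟨0, h0b⟩ : Y)]))
      rw [this] at hu; simp at hu
    · intro hz
      exact absurd hz (by rw [hY0 z]; simp)
end
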